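/- Let τ > 0, n ∈ ℕ, and λ ∈ ℂ with Re λ < 0. Then the Laguerre coefficient for order of generalization α = 0 satisfies s_{n,τ,0,λ} = −2√τ · (2λ+τ)^n / (2λ−τ)^{n+1}. -/

import Mathlib

open MeasureTheory

/-- The (ordinary) Laguerre polynomial `L_n(t) = ∑_{k=0}^n (-1)^k (n!/((k!)²(n-k)!)) t^k`. -/
noncomputable def ordLagPoly (n : ℕ) (t : ℝ) : ℝ :=
  ∑ k ∈ Finset.range (n + 1),
    (-1 : ℝ) ^ k * ((n.factorial : ℝ) / ((k.factorial : ℝ) ^ 2 * (n - k).factorial)) * t ^ k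

/-- The Laguerre function `l_{n,τ}(t) = √τ e^{-τt/2} L_n(τt)`. -/
noncomputable def ordLagFun (τ : ℝ) (n : ℕ) (t : ℝ) : ℝ :=
  Real.sqrt τ * Real.exp (-τ * t / 2) * ordLagPoly n (τ * t)

/-- The Laguerre coefficient `s_{n,τ,0,λ} = ∫₀^∞ e^{λ t} l_{n,τ}(t) dt`. -/
noncomputable def ordLagCoef (τ : ℝ) (n : ℕ) (z : ℂ) : ℂ :=
  ∫ t in Set.Ioi (0 : ℝ), Complex.exp (z * t) * (ordLagFun τ n t : ℂ)

/-! Expanding `L_n` in powers of `t`, the coefficient is a combination of the Laplace transforms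
`∫₀^∞ t^k e^{-st} dt = k! / s^{k+1}` at `s = τ/2 - λ`. The factorials cancel against those of the
Laguerre coefficients, and what remains, `√τ ∑_k C(n,k) (-τ)^k / s^{k+1}`, is the binomial expansion
of `√τ (s - τ)^n / s^{n+1}`. -/

open Set Filter Topology

section LaplacePow

variable {s : ℂ}

theorem norm_ofReal_pow_mul_cexp_neg_mul {t : ℝ} (ht : 0 ≤ t) (k : ℕ) :
    ‖(t : ℂ) ^ k * Complex.exp (-(s * t))‖ = t ^ k * Real.exp (-s.re * t) := by
  simp [norm_pow, Complex.norm_exp, Complex.mul_re, abs_of_nonneg ht]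

theorem tendsto_ofReal_pow_mul_cexp_neg_mul_atTop (hs : 0 < s.re) (k : ℕ) :
    Tendsto (fun t : ℝ => (t : ℂ) ^ k * Complex.exp (-(s * t))) atTop (𝓝 0) := by
  rw [tendsto_zero_iff_norm_tendsto_zero]
  refine (tendsto_rpow_mul_exp_neg_mul_atTop_nhds_zero k s.re hs).congr' ?_
  filter_upwards [eventually_ge_atTop 0] with t ht
  rw [norm_ofReal_pow_mul_cexp_neg_mul ht, Real.rpow_natCast]

theorem integrableOn_ofReal_pow_mul_cexp_neg_mul_Ioi (hs : 0 < s.re) (k : ℕ) :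
    IntegrableOn (fun t : ℝ => (t : ℂ) ^ k * Complex.exp (-(s * t))) (Ioi 0) := by
  have hdom := integrableOn_rpow_mul_exp_neg_mul_rpow (s := k) (p := 1)
    (neg_one_lt_zero.trans_le k.cast_nonneg) one_pos hs
  refine Integrable.mono' hdom (by fun_prop) ?_
  filter_upwards [ae_restrict_mem measurableSet_Ioi] with t ht
  rw [norm_ofReal_pow_mul_cexp_neg_mul (le_of_lt ht), Real.rpow_natCast, Real.rpow_one]

/-- Integrate the derivative of `t ^ (k + 1) e^{-st}`, which vanishes at `0` and at `∞`. -/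
theorem mul_integral_ofReal_pow_succ_mul_cexp_neg_mul_Ioi (hs : 0 < s.re) (k : ℕ) :
    s * ∫ t in Ioi (0 : ℝ), (t : ℂ) ^ (k + 1) * Complex.exp (-(s * t)) =
      (k + 1) * ∫ t in Ioi (0 : ℝ), (t : ℂ) ^ k * Complex.exp (-(s * t)) := by
  have hderiv : ∀ x ∈ Ici (0 : ℝ),
      HasDerivAt (fun t : ℝ => (t : ℂ) ^ (k + 1) * Complex.exp (-(s * t)))
      ((k + 1) * ((x : ℂ) ^ k * Complex.exp (-(s * x))) -
        s * ((x : ℂ) ^ (k + 1) * Complex.exp (-(s * x)))) x := by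
    intro x _
    have hpow : HasDerivAt (fun t : ℝ => (t : ℂ) ^ (k + 1)) ((k + 1 : ℕ) * (x : ℂ) ^ k) x := by
      simpa using (hasDerivAt_pow (k + 1) (x : ℂ)).comp_ofReal
    have hexp :
        HasDerivAt (fun t : ℝ => Complex.exp (-(s * t))) (Complex.exp (-(s * x)) * -s) x := by
      simpa using (((hasDerivAt_id (x : ℂ)).const_mul s).neg.cexp).comp_ofReal
    refine (hpow.mul hexp).congr_deriv ?_
    push_cast
    ring
  have hint := integrableOn_ofReal_pow_mul_cexp_neg_mul_Ioi hs
  have h := integral_Ioi_of_hasDerivAt_of_tendsto' hderiv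
    (((hint k).const_mul _).sub ((hint (k + 1)).const_mul _))
    (tendsto_ofReal_pow_mul_cexp_neg_mul_atTop hs (k + 1))
  rw [integral_sub ((hint k).const_mul _) ((hint (k + 1)).const_mul _), integral_const_mul,
    integral_const_mul] at h
  simp only [Complex.ofReal_zero, ne_eq, Nat.add_one_ne_zero, not_false_eq_true, zero_pow,
    zero_mul, sub_zero] at h
  exact (sub_eq_zero.mp h).symm

theorem integral_ofReal_pow_mul_cexp_neg_mul_Ioi (hs : 0 < s.re) (k : ℕ) :
    ∫ t in Ioi (0 : ℝ), (t : ℂ) ^ k * Complex.exp (-(s * t)) = k.factorial / s ^ (k + 1) := by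
  have hs0 : s ≠ 0 := ne_of_apply_ne Complex.re hs.ne'
  induction k with
  | zero =>
    have h := integral_exp_mul_complex_Ioi (a := -s) (by simpa using hs) 0
    simp only [neg_mul, pow_zero, one_mul, Complex.ofReal_zero, mul_zero, Complex.exp_zero] at h ⊢
    rw [h, neg_div_neg_eq]
    simp
  | succ k ih =>
    have h := mul_integral_ofReal_pow_succ_mul_cexp_neg_mul_Ioi hs k
    rw [ih] at h
    rw [← mul_right_inj' hs0, h, Nat.factorial_succ]
    push_cast
    field_simp
    ring

theorem integral_sum_mul_ofReal_pow_mul_cexp_neg_mul_Ioi (hs : 0 < s.re) (N : ℕ) (c : ℕ → ℂ) :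
    ∫ t in Ioi (0 : ℝ), ∑ k ∈ Finset.range N, c k * ((t : ℂ) ^ k * Complex.exp (-(s * t))) =
      ∑ k ∈ Finset.range N, c k * (k.factorial / s ^ (k + 1)) := by
  rw [integral_finsetSum _ fun k _ =>
    (integrableOn_ofReal_pow_mul_cexp_neg_mul_Ioi hs k).const_mul (c k)]
  simp_rw [integral_const_mul, integral_ofReal_pow_mul_cexp_neg_mul_Ioi hs]

end LaplacePow

theorem sum_range_choose_mul_pow_div_pow_succ {K : Type*} [Field K] (a : K) {b : K} (hb : b ≠ 0)
    (n : ℕ) :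
    ∑ k ∈ Finset.range (n + 1), n.choose k * a ^ k / b ^ (k + 1) = (a + b) ^ n / b ^ (n + 1) := by
  rw [add_pow, Finset.sum_div]
  refine Finset.sum_congr rfl fun k hk => ?_
  have hkn : k ≤ n := Nat.lt_succ_iff.mp (Finset.mem_range.mp hk)
  rw [show n + 1 = (k + 1) + (n - k) by omega, pow_add]
  field_simp
  ring

theorem ordLagPoly_eq_sum_choose (n : ℕ) (t : ℝ) :
    ordLagPoly n t = ∑ k ∈ Finset.range (n + 1), n.choose k * (-t) ^ k / k.factorial := by
  refine Finset.sum_congr rfl fun k hk => ?_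
  have hkn : k ≤ n := Nat.lt_succ_iff.mp (Finset.mem_range.mp hk)
  rw [Nat.cast_choose ℝ hkn, neg_pow]
  field_simp
  ring

theorem cexp_mul_ordLagFun (τ : ℝ) (n : ℕ) (z : ℂ) (t : ℝ) :
    Complex.exp (z * t) * (ordLagFun τ n t : ℂ) =
      ∑ k ∈ Finset.range (n + 1), (Real.sqrt τ * n.choose k * (-τ) ^ k / k.factorial : ℂ) *
        ((t : ℂ) ^ k * Complex.exp (-((τ / 2 - z) * t))) := by
  have hexp :
      Complex.exp (z * t) * Complex.exp (-τ * t / 2) = Complex.exp (-((τ / 2 - z) * t)) := by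
    rw [← Complex.exp_add]
    ring_nf
  simp only [ordLagFun, ordLagPoly_eq_sum_choose]
  push_cast
  rw [← hexp, Finset.mul_sum, Finset.mul_sum]
  refine Finset.sum_congr rfl fun k _ => ?_
  ring

theorem ordLagCoef_eq (τ : ℝ) (hτ : 0 < τ) (n : ℕ) (z : ℂ) (hz : z.re < 0) :
    ordLagCoef τ n z =
      -2 * (Real.sqrt τ : ℂ) * (2 * z + τ) ^ n / (2 * z - τ) ^ (n + 1) := by
  have hs : 0 < ((τ : ℂ) / 2 - z).re := by
    simp only [Complex.sub_re, Complex.div_ofNat_re, Complex.ofReal_re]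
    linarith
  have hs0 : (τ : ℂ) / 2 - z ≠ 0 := ne_of_apply_ne Complex.re hs.ne'
  have hcoef : ordLagCoef τ n z =
      Real.sqrt τ * ((-τ + (τ / 2 - z)) ^ n / (τ / 2 - z) ^ (n + 1)) := by
    simp_rw [ordLagCoef, cexp_mul_ordLagFun, integral_sum_mul_ofReal_pow_mul_cexp_neg_mul_Ioi hs,
      ← sum_range_choose_mul_pow_div_pow_succ _ hs0, Finset.mul_sum]
    refine Finset.sum_congr rfl fun k _ => ?_
    have hk : (k.factorial : ℂ) ≠ 0 := Nat.cast_ne_zero.mpr k.factorial_ne_zero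
    field_simp
  have hden : 2 * z - τ ≠ 0 := fun h => hs0 (by linear_combination -h / 2)
  rw [hcoef, show -τ + (τ / 2 - z) = (2 * z + τ) / (-2) by ring,
    show τ / 2 - z = (2 * z - τ) / (-2) by ring, div_pow, div_pow, pow_succ (-2 : ℂ)]
  field_simp
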